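/- Let S ⊂ ℝⁿ be a (U,m)-set with unit cell U of diameter d and c(S) = (Vol(U)/(m·Vₙ))^{1/n}. Define AMD_k(S;U) = (1/m) Σ_{p∈S∩U} d_k(S;p). Then |AMD_k(S;U) − c(S)·k^{1/n}| ≤ d for all k ≥ 1, and consequently AMD_k(S;U)/k^{1/n} → c(S) as k → ∞. -/

import Mathlib

/-! The translates `v +ᵥ U` of the unit cell by lattice vectors are pairwise disjoint, cover the
space, have the volume of `U` and diameter `d`, and each contains exactly `m` points of `S`. The
cells meeting a ball `B(p, r)` cover it and lie inside `B(p, r + d)`; counting them shows that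
`#(S ∩ B(p, r)) ≤ m vol B(p, r + d) / vol U` and `m vol B(p, r) / vol U ≤ #(S ∩ B(p, r + d))`.
So the radius at which the ball about `p` first contains `k` further points of `S` is within `d`
of the radius `c k^{1/n}` of a ball of volume `k vol U / m`. Averaging over the `m` points of
`S ∩ U` gives the bound, and dividing by `k^{1/n}` the limit. -/

open Metric Set MeasureTheory Filter

/-- The `k`-th nearest neighbour distance from `p` to the set `X` (excluding `p` itself). -/
noncomputable def kthNNDist {E : Type*} [MetricSpace E] (X : Set E) (p : E) (k : ℕ) : ℝ :=
  sInf {r : ℝ | k ≤ Nat.card ↥((X \ {p}) ∩ Metric.closedBall p r)}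

/-- The lattice generated by a basis `b` of `ℝⁿ`: all integer linear combinations. -/
def latticeOf {n : ℕ} (b : Module.Basis (Fin n) ℝ (EuclideanSpace ℝ (Fin n))) :
    Set (EuclideanSpace ℝ (Fin n)) :=
  {x | ∃ c : Fin n → ℤ, x = ∑ i, (c i : ℝ) • b i}

/-- The unit cell of the basis `b`. -/
def unitCellOf {n : ℕ} (b : Module.Basis (Fin n) ℝ (EuclideanSpace ℝ (Fin n))) :
    Set (EuclideanSpace ℝ (Fin n)) :=
  {x | ∀ i, b.repr x i ∈ Set.Ico (0 : ℝ) 1}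

open Submodule ZSpan Bornology Pointwise Module
open scoped ENNReal

section NearestNeighbour

variable {α : Type*} [MetricSpace α] {X : Set α} {p : α} {k : ℕ}

lemma card_sdiff_inter_closedBall (r : ℝ) :
    Nat.card ↥((X \ {p}) ∩ closedBall p r) = ((X ∩ closedBall p r) \ {p}).ncard := by
  rw [Nat.card_coe_set_eq, sdiff_inter_right_comm]

lemma nonneg_of_le_card_sdiff_inter_closedBall {r : ℝ} (hk : 1 ≤ k)
    (h : k ≤ Nat.card ↥((X \ {p}) ∩ closedBall p r)) : 0 ≤ r := by
  obtain ⟨x, -, hx⟩ := (Nat.card_ne_zero.mp (Nat.one_le_iff_ne_zero.mp (hk.trans h))).1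
  exact dist_nonneg.trans hx

lemma bddBelow_kthNNDist_set (hk : 1 ≤ k) :
    BddBelow {r : ℝ | k ≤ Nat.card ↥((X \ {p}) ∩ closedBall p r)} :=
  ⟨0, fun _ hr => nonneg_of_le_card_sdiff_inter_closedBall hk hr⟩

lemma le_card_sdiff_inter_closedBall_of_lt_ncard {r : ℝ}
    (h : k < (X ∩ closedBall p r).ncard) : k ≤ Nat.card ↥((X \ {p}) ∩ closedBall p r) := by
  rw [card_sdiff_inter_closedBall]
  exact (Nat.le_sub_one_of_lt h).trans (Set.pred_ncard_le_ncard_sdiff_singleton _ _)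

lemma kthNNDist_le_of_lt_ncard (hk : 1 ≤ k) {r : ℝ} (h : k < (X ∩ closedBall p r).ncard) :
    kthNNDist X p k ≤ r :=
  csInf_le (bddBelow_kthNNDist_set hk) (le_card_sdiff_inter_closedBall_of_lt_ncard h)

lemma le_kthNNDist_of_forall {a r₀ : ℝ} (hk : 1 ≤ k) (hr₀ : k < (X ∩ closedBall p r₀).ncard)
    (h : ∀ r, 0 ≤ r → k ≤ (X ∩ closedBall p r).ncard → a ≤ r) : a ≤ kthNNDist X p k := by
  refine le_csInf ⟨r₀, le_card_sdiff_inter_closedBall_of_lt_ncard hr₀⟩ fun r hr => ?_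
  refine h r (nonneg_of_le_card_sdiff_inter_closedBall hk hr) (hr.trans ?_)
  rw [card_sdiff_inter_closedBall]
  exact Set.ncard_sdiff_singleton_le _ _

lemma abs_kthNNDist_sub_le {n : ℕ} {c d s : ℝ} (hn : 0 < n) (hc : 0 < c) (hd : 0 ≤ d)
    (hk : 1 ≤ k) (hs : 0 ≤ s) (hsk : s ^ n = c ^ n * k)
    (hlow : ∀ ρ, 0 ≤ ρ → ρ ^ n ≤ c ^ n * (X ∩ closedBall p (ρ + d)).ncard)
    (hup : ∀ r, 0 ≤ r → c ^ n * (X ∩ closedBall p r).ncard ≤ (r + d) ^ n) :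
    |kthNNDist X p k - s| ≤ d := by
  have hcn : 0 < c ^ n := pow_pos hc n
  have lt_ncard : ∀ ε, 0 < ε → k < (X ∩ closedBall p (s + ε + d)).ncard := by
    intro ε hε
    have : c ^ n * k < c ^ n * (X ∩ closedBall p (s + ε + d)).ncard :=
      hsk ▸ (pow_lt_pow_left₀ (by linarith) hs hn.ne').trans_le (hlow _ (by positivity))
    exact_mod_cast lt_of_mul_lt_mul_left this hcn.le
  rw [abs_le]
  constructor
  · suffices s - d ≤ kthNNDist X p k by linarith
    refine le_kthNNDist_of_forall hk (lt_ncard 1 one_pos) fun r hr hkr => ?_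
    have : s ^ n ≤ (r + d) ^ n :=
      hsk ▸ (mul_le_mul_of_nonneg_left (by exact_mod_cast hkr) hcn.le).trans (hup r hr)
    linarith [(pow_le_pow_iff_left₀ hs (by linarith) hn.ne').mp this]
  · suffices kthNNDist X p k ≤ s + d by linarith
    refine le_of_forall_pos_le_add fun ε hε => ?_
    linarith [kthNNDist_le_of_lt_ncard hk (lt_ncard ε hε)]

end NearestNeighbour

section LatticeTiling

variable {ι E : Type*} [Fintype ι] [NormedAddCommGroup E] [NormedSpace ℝ E] (b : Module.Basis ι ℝ E)

lemma mem_vadd_fundamentalDomain_iff {v x : E} (hv : v ∈ span ℤ (range b)) :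
    x ∈ v +ᵥ fundamentalDomain b ↔ (floor b x : E) = v := by
  rw [mem_vadd_set_iff_neg_vadd_mem]
  have key := vadd_mem_fundamentalDomain b ⟨-v, neg_mem hv⟩ x
  rw [Subtype.ext_iff, NegMemClass.coe_neg, neg_inj, eq_comm] at key
  exact key

lemma mem_floor_vadd_fundamentalDomain (x : E) : x ∈ (floor b x : E) +ᵥ fundamentalDomain b :=
  (mem_vadd_fundamentalDomain_iff b (floor b x).2).mpr rfl

lemma pairwiseDisjoint_vadd_fundamentalDomain :
    (span ℤ (range b) : Set E).PairwiseDisjoint (· +ᵥ fundamentalDomain b) := by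
  intro v hv w hw hvw
  refine Set.disjoint_left.mpr fun x hxv hxw => hvw ?_
  rw [← (mem_vadd_fundamentalDomain_iff b hv).mp hxv, (mem_vadd_fundamentalDomain_iff b hw).mp hxw]

lemma exists_finset_cover_subset_cthickening [FiniteDimensional ℝ E] {A : Set E}
    (hA : IsBounded A) :
    ∃ F : Finset E, (F : Set E) ⊆ span ℤ (range b) ∧ A ⊆ ⋃ v ∈ F, v +ᵥ fundamentalDomain b ∧
      ⋃ v ∈ F, v +ᵥ fundamentalDomain b ⊆ cthickening (diam (fundamentalDomain b)) A := by
  have hfin := setFinite_inter b (hA.sub (fundamentalDomain_isBounded b))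
  refine ⟨hfin.toFinset, by simp, fun x hx => ?_, ?_⟩
  · refine mem_biUnion (x := (floor b x : E)) ?_ (mem_floor_vadd_fundamentalDomain b x)
    rw [Finite.coe_toFinset]
    exact ⟨⟨x, hx, fract b x, fract_mem_fundamentalDomain b x, sub_sub_cancel _ _⟩, (floor b x).2⟩
  · simp only [Finite.mem_toFinset, iUnion₂_subset_iff]
    rintro _ ⟨⟨a, ha, u, hu, rfl⟩, -⟩ _ ⟨w, hw, rfl⟩
    refine mem_cthickening_of_dist_le _ a _ A ha ?_
    change dist (a - u + w) a ≤ _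
    rw [dist_eq_norm, show a - u + w - a = w - u by abel, ← dist_eq_norm]
    exact dist_le_diam_of_mem (fundamentalDomain_isBounded b) hw hu

end LatticeTiling

section PeriodicCount

variable {ι E : Type*} [NormedAddCommGroup E] [NormedSpace ℝ E] {b : Module.Basis ι ℝ E}
  {S : Set E} {m : ℕ}

/-- The paper's `(U,m)`-sets, for `U` the fundamental domain of `b`. -/
def IsUMSet (b : Module.Basis ι ℝ E) (S : Set E) (m : ℕ) : Prop :=
  ∀ v ∈ span ℤ (range b), (S ∩ (v +ᵥ fundamentalDomain b)).ncard = m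

lemma finite_inter_vadd_fundamentalDomain (hm : 0 < m) (hS : IsUMSet b S m)
    {v : E} (hv : v ∈ span ℤ (range b)) :
    (S ∩ (v +ᵥ fundamentalDomain b)).Finite :=
  finite_of_ncard_pos (by rw [hS v hv]; exact hm)

variable [Fintype ι]

lemma ncard_inter_biUnion_vadd_fundamentalDomain (hm : 0 < m) (hS : IsUMSet b S m)
    {F : Finset E} (hF : (F : Set E) ⊆ span ℤ (range b)) :
    (S ∩ ⋃ v ∈ F, v +ᵥ fundamentalDomain b).ncard = m * F.card := by
  rw [inter_iUnion₂, ← Finset.set_biUnion_coe, F.finite_toSet.ncard_biUnion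
      (fun v hv => finite_inter_vadd_fundamentalDomain hm hS (hF hv))
      (((pairwiseDisjoint_vadd_fundamentalDomain b).subset hF).mono fun _ => inter_subset_right),
    finsum_mem_coe_finset, Finset.sum_congr rfl fun v hv => hS v (hF hv), Finset.sum_const,
    smul_eq_mul, mul_comm]

lemma finite_inter_of_isBounded [FiniteDimensional ℝ E] (hm : 0 < m) (hS : IsUMSet b S m)
    {A : Set E} (hA : IsBounded A) : (S ∩ A).Finite := by
  obtain ⟨F, hFL, hAF, -⟩ := exists_finset_cover_subset_cthickening b hA
  refine (F.finite_toSet.biUnion fun v hv =>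
    finite_inter_vadd_fundamentalDomain hm hS (hFL hv)).subset ?_
  rw [Finset.set_biUnion_coe, ← inter_iUnion₂]
  exact inter_subset_inter_right S hAF

variable [MeasurableSpace E] [BorelSpace E] (μ : Measure E) [μ.IsAddHaarMeasure]

lemma measure_biUnion_vadd_fundamentalDomain {F : Finset E}
    (hF : (F : Set E) ⊆ span ℤ (range b)) :
    μ (⋃ v ∈ F, v +ᵥ fundamentalDomain b) = F.card * μ (fundamentalDomain b) := by
  rw [measure_biUnion_finset ((pairwiseDisjoint_vadd_fundamentalDomain b).subset hF)
    fun v _ => (fundamentalDomain_measurableSet b).const_vadd v]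
  simp [measure_vadd]

variable [FiniteDimensional ℝ E]

lemma ncard_inter_mul_measure_le (hm : 0 < m) (hS : IsUMSet b S m)
    {A : Set E} (hA : IsBounded A) :
    (S ∩ A).ncard * μ (fundamentalDomain b) ≤
      m * μ (cthickening (diam (fundamentalDomain b)) A) := by
  obtain ⟨F, hFL, hAF, hFA⟩ := exists_finset_cover_subset_cthickening b hA
  have hcount : (S ∩ A).ncard ≤ m * F.card := by
    rw [← ncard_inter_biUnion_vadd_fundamentalDomain hm hS hFL]
    exact ncard_le_ncard (inter_subset_inter_right S hAF)
      ((finite_inter_of_isBounded hm hS hA.cthickening).subset (inter_subset_inter_right S hFA))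
  calc ((S ∩ A).ncard : ℝ≥0∞) * μ (fundamentalDomain b)
      ≤ (m * F.card : ℕ) * μ (fundamentalDomain b) := by gcongr
    _ = m * μ (⋃ v ∈ F, v +ᵥ fundamentalDomain b) := by
      rw [measure_biUnion_vadd_fundamentalDomain μ hFL]; push_cast; ring
    _ ≤ m * μ (cthickening (diam (fundamentalDomain b)) A) := by gcongr

lemma mul_measure_le_ncard_inter_mul (hm : 0 < m) (hS : IsUMSet b S m)
    {A : Set E} (hA : IsBounded A) :
    m * μ A ≤ (S ∩ cthickening (diam (fundamentalDomain b)) A).ncard * μ (fundamentalDomain b) := by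
  obtain ⟨F, hFL, hAF, hFA⟩ := exists_finset_cover_subset_cthickening b hA
  calc m * μ A ≤ m * μ (⋃ v ∈ F, v +ᵥ fundamentalDomain b) := by gcongr
    _ = (S ∩ ⋃ v ∈ F, v +ᵥ fundamentalDomain b).ncard * μ (fundamentalDomain b) := by
      rw [measure_biUnion_vadd_fundamentalDomain μ hFL,
        ncard_inter_biUnion_vadd_fundamentalDomain hm hS hFL]
      push_cast; ring
    _ ≤ (S ∩ cthickening (diam (fundamentalDomain b)) A).ncard * μ (fundamentalDomain b) := by
      gcongr
      exact finite_inter_of_isBounded hm hS hA.cthickening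

end PeriodicCount

section Balls

variable {ι E : Type*} [Fintype ι] [NormedAddCommGroup E] [NormedSpace ℝ E]
  [FiniteDimensional ℝ E] [MeasurableSpace E] [BorelSpace E] (μ : Measure E) [μ.IsAddHaarMeasure]
  {b : Module.Basis ι ℝ E} {S : Set E} {m : ℕ}

lemma mul_measureReal_closedBall_le (hm : 0 < m) (hS : IsUMSet b S m) (p : E) {ρ : ℝ}
    (hρ : 0 ≤ ρ) :
    m * μ.real (closedBall p ρ) ≤
      (S ∩ closedBall p (ρ + diam (fundamentalDomain b))).ncard * μ.real (fundamentalDomain b) := by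
  have h := mul_measure_le_ncard_inter_mul μ hm hS (isBounded_closedBall (x := p) (r := ρ))
  rw [cthickening_closedBall diam_nonneg hρ, add_comm] at h
  simpa only [ENNReal.toReal_mul, ENNReal.toReal_natCast, ← measureReal_def] using
    ENNReal.toReal_mono (ENNReal.mul_ne_top (ENNReal.natCast_ne_top _)
      (fundamentalDomain_isBounded b).measure_lt_top.ne) h

lemma ncard_inter_closedBall_mul_le (hm : 0 < m) (hS : IsUMSet b S m) (p : E) {r : ℝ}
    (hr : 0 ≤ r) :
    (S ∩ closedBall p r).ncard * μ.real (fundamentalDomain b) ≤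
      m * μ.real (closedBall p (r + diam (fundamentalDomain b))) := by
  have h := ncard_inter_mul_measure_le μ hm hS (isBounded_closedBall (x := p) (r := r))
  rw [cthickening_closedBall diam_nonneg hr, add_comm] at h
  simpa only [ENNReal.toReal_mul, ENNReal.toReal_natCast, ← measureReal_def] using
    ENNReal.toReal_mono (ENNReal.mul_ne_top (ENNReal.natCast_ne_top _)
      measure_closedBall_lt_top.ne) h

lemma abs_kthNNDist_sub_le_diam (hm : 0 < m) (hS : IsUMSet b S m)
    (hE : 0 < finrank ℝ E) (p : E) {k : ℕ} (hk : 1 ≤ k) :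
    |kthNNDist S p k - (μ.real (fundamentalDomain b) / (m * μ.real (ball 0 1))) ^
      ((1 : ℝ) / finrank ℝ E) * (k : ℝ) ^ ((1 : ℝ) / finrank ℝ E)| ≤
      diam (fundamentalDomain b) := by
  set c := (μ.real (fundamentalDomain b) / (m * μ.real (ball 0 1))) ^ ((1 : ℝ) / finrank ℝ E)
    with hc_def
  have hd : 0 ≤ diam (fundamentalDomain b) := diam_nonneg
  have hmB : 0 < m * μ.real (ball (0 : E) 1) :=
    mul_pos (by exact_mod_cast hm) (ENNReal.toReal_pos (measure_ball_pos μ 0 one_pos).ne'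
      measure_ball_lt_top.ne)
  have hU : 0 < μ.real (fundamentalDomain b) :=
    ENNReal.toReal_pos (measure_fundamentalDomain_ne_zero b)
      (fundamentalDomain_isBounded b).measure_lt_top.ne
  have hcn : c ^ finrank ℝ E = μ.real (fundamentalDomain b) / (m * μ.real (ball 0 1)) := by
    rw [hc_def, one_div, Real.rpow_inv_natCast_pow (div_pos hU hmB).le hE.ne']
  have hc : 0 < c := Real.rpow_pos_of_pos (div_pos hU hmB) _
  refine abs_kthNNDist_sub_le hE hc hd hk (by positivity) ?_ (fun ρ hρ => ?_) (fun r hr => ?_)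
  · rw [mul_pow, one_div, Real.rpow_inv_natCast_pow (Nat.cast_nonneg k) hE.ne']
  · have h := mul_measureReal_closedBall_le μ hm hS p hρ
    rw [Measure.addHaar_real_closedBall μ p hρ] at h
    rw [hcn, div_mul_eq_mul_div, le_div_iff₀ hmB]
    linear_combination h
  · have h := ncard_inter_closedBall_mul_le μ hm hS p hr
    rw [Measure.addHaar_real_closedBall μ p (add_nonneg hr hd)] at h
    rw [hcn, div_mul_eq_mul_div, div_le_iff₀ hmB]
    linear_combination h

end Balls

lemma abs_sum_div_card_sub_le {α : Type*} {F : Finset α} {f : α → ℝ} {x d : ℝ}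
    (hF : F.Nonempty) (h : ∀ p ∈ F, |f p - x| ≤ d) : |(∑ p ∈ F, f p) / F.card - x| ≤ d := by
  have hcard : (0 : ℝ) < F.card := by exact_mod_cast hF.card_pos
  rw [show (∑ p ∈ F, f p) / F.card - x = (∑ p ∈ F, (f p - x)) / F.card by
      rw [Finset.sum_sub_distrib, Finset.sum_const, nsmul_eq_mul]; field_simp,
    abs_div, abs_of_pos hcard, div_le_iff₀ hcard]
  calc |∑ p ∈ F, (f p - x)| ≤ ∑ p ∈ F, |f p - x| := Finset.abs_sum_le_sum_abs _ _
    _ ≤ ∑ _p ∈ F, d := Finset.sum_le_sum h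
    _ = d * F.card := by rw [Finset.sum_const, nsmul_eq_mul, mul_comm]

lemma tendsto_div_of_abs_sub_mul_le {β : Type*} {l : Filter β} {a g : β → ℝ} {c d : ℝ}
    (hg : Tendsto g l atTop) (h : ∀ᶠ k in l, |a k - c * g k| ≤ d) :
    Tendsto (fun k => a k / g k) l (nhds c) := by
  rw [tendsto_iff_norm_sub_tendsto_zero]
  refine squeeze_zero' (.of_forall fun _ => norm_nonneg _) ?_
    ((tendsto_const_nhds (x := d)).div_atTop hg)
  filter_upwards [h, hg.eventually_gt_atTop 0] with k hk hgk
  rw [Real.norm_eq_abs, show a k / g k - c = (a k - c * g k) / g k by field_simp, abs_div,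
    abs_of_pos hgk]
  exact div_le_div_of_nonneg_right hk hgk.le

lemma latticeOf_eq_span {n : ℕ} (b : Module.Basis (Fin n) ℝ (EuclideanSpace ℝ (Fin n))) :
    latticeOf b = span ℤ (range b) := by
  ext x
  simp only [latticeOf, mem_ofPred_eq, SetLike.mem_coe, mem_span_range_iff_exists_fun,
    Int.cast_smul_eq_zsmul, eq_comm]

/-- Asymptotic behaviour of AMD: for a `(U,m)`-set `S ⊂ ℝⁿ`,
`|AMD_k(S;U) − c(S)·k^{1/n}| ≤ d` for all `k ≥ 1`, where `d` is the diameter of `U` and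
`c(S)` the point packing coefficient; consequently `AMD_k(S;U)/k^{1/n} → c(S)`. -/
theorem AMD_asymptotic {n : ℕ} (hn : 0 < n)
    (b : Module.Basis (Fin n) ℝ (EuclideanSpace ℝ (Fin n)))
    (S : Set (EuclideanSpace ℝ (Fin n))) (m : ℕ) (hm : 0 < m)
    (hUm : ∀ v ∈ latticeOf b, Nat.card ↥(S ∩ ((v + ·) '' unitCellOf b)) = m)
    (hfin : (S ∩ unitCellOf b).Finite)
    (d c : ℝ) (hd : d = Metric.diam (unitCellOf b))
    (hc : c = ((volume (unitCellOf b)).toReal /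
      (m * (volume (Metric.ball (0 : EuclideanSpace ℝ (Fin n)) 1)).toReal)) ^ ((1 : ℝ) / n))
    (amd : ℕ → ℝ)
    (hamd : ∀ k, amd k = (∑ p ∈ hfin.toFinset, kthNNDist S p k) / m) :
    (∀ k : ℕ, 1 ≤ k → |amd k - c * (k : ℝ) ^ ((1 : ℝ) / n)| ≤ d) ∧
    Tendsto (fun k : ℕ => amd k / (k : ℝ) ^ ((1 : ℝ) / n)) atTop (nhds c) := by
  have hS : IsUMSet b S m := fun v hv => by
    rw [← Nat.card_coe_set_eq]
    exact hUm v (latticeOf_eq_span b ▸ hv)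
  have hcard : hfin.toFinset.card = m := by
    have h0 := hS 0 (zero_mem _)
    rw [zero_vadd] at h0
    exact (ncard_eq_toFinset_card _ hfin).symm.trans h0
  have hrank : Module.finrank ℝ (EuclideanSpace ℝ (Fin n)) = n := finrank_euclideanSpace_fin
  have bound : ∀ k : ℕ, 1 ≤ k → |amd k - c * (k : ℝ) ^ ((1 : ℝ) / n)| ≤ d := fun k hk => by
    rw [hamd k, ← hcard, hd, hc]
    refine abs_sum_div_card_sub_le (by simp [← Finset.card_pos, hcard, hm]) fun p _ => ?_
    have := abs_kthNNDist_sub_le_diam volume hm hS (by rwa [hrank]) p hk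
    rwa [hrank] at this
  refine ⟨bound, tendsto_div_of_abs_sub_mul_le ?_ (eventually_atTop.2 ⟨1, bound⟩)⟩
  exact (tendsto_rpow_atTop (by positivity)).comp tendsto_natCast_atTop_atTop
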